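/- Let d ≥ 1 be an integer, let Ψ = (ψ_i)_{i≥1} be a sequence of reals with 0 < ψ_i ≤ 1 for all i, let n ≥ 2 and 𝔰 = (s_1, …, s_n) ∈ S_n, and set 𝔰′ = (s_1, …, s_{n−1}) ∈ S_{n−1}. Then Q̄(P^n_Ψ(𝔰), ℓ^n_Ψ) ⊆ Q̄(P^{n−1}_Ψ(𝔰′), ℓ^{n−1}_Ψ). -/

import Mathlib

open MeasureTheory Set Filter
open scoped ENNReal NNReal

noncomputable section

/-- The closed cube of side `l` centered at `c` in `ℝ^d`. -/
def cubeC (d : ℕ) (c : EuclideanSpace ℝ (Fin d)) (l : ℝ) : Set (EuclideanSpace ℝ (Fin d)) :=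
  {x | ∀ j, |x j - c j| ≤ l / 2}

/-- The open cube of side `l` centered at `c` in `ℝ^d`. -/
def cubeO (d : ℕ) (c : EuclideanSpace ℝ (Fin d)) (l : ℝ) : Set (EuclideanSpace ℝ (Fin d)) :=
  {x | ∀ j, |x j - c j| < l / 2}

/-- A finite string `(s_1, …, s_n)` of elements of `{−1,1}^d`, encoded as a real-valued
function all of whose values are `±1`. -/
def IsSignStr {d n : ℕ} (s : Fin n → Fin d → ℝ) : Prop := ∀ i j, s i j = 1 ∨ s i j = -1

/-- An infinite sequence `(s_1, s_2, …)` of elements of `{−1,1}^d` (the set `𝒮`). -/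
def IsSignSeq {d : ℕ} (s : ℕ → Fin d → ℝ) : Prop := ∀ i j, s i j = 1 ∨ s i j = -1

/-- `ℓ^n_Ψ = (∏_{i=1}^n ψ_i)/2^n`; here `Ψ i` stands for `ψ_{i+1}`. -/
def ell (Ψ : ℕ → ℝ) (n : ℕ) : ℝ := (∏ i ∈ Finset.range n, Ψ i) / 2 ^ n

/-- `P^n_Ψ(𝔰)`, with coordinates `1/2 + (1/4) ∑_{i=1}^n s_i^j ℓ^{i−1}_Ψ`. -/
def Pfin (d : ℕ) (Ψ : ℕ → ℝ) {n : ℕ} (s : Fin n → Fin d → ℝ) : EuclideanSpace ℝ (Fin d) :=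
  WithLp.toLp 2 (fun j => 1 / 2 + (1 / 4) * ∑ i, s i j * ell Ψ i)

/-- `𝒫_Ψ(𝔰)`, with coordinates `1/2 + (1/4) ∑_{i=1}^∞ s_i^j ℓ^{i−1}_Ψ`. -/
def Pinf (d : ℕ) (Ψ : ℕ → ℝ) (s : ℕ → Fin d → ℝ) : EuclideanSpace ℝ (Fin d) :=
  WithLp.toLp 2 (fun j => 1 / 2 + (1 / 4) * ∑' i, s i j * ell Ψ i)

/-- The constant sequence `Θ` of `1`s. -/
def Theta : ℕ → ℝ := fun _ => 1

/-- The constant sequence `Φ` with `ψ_i = 2^{−ν}`. -/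
def Phi (ν : ℝ) : ℕ → ℝ := fun _ => (2 : ℝ) ^ (-ν)

/-- `P̃^{n+1}_Ψ(𝔰) = P^{n+1}_Ψ(𝔰) − P^n_Ψ(𝔰′) + P^n_Θ(𝔰′)` (for `n = 0` this is `P^1_Ψ`). -/
def Ptilde (d : ℕ) (Ψ : ℕ → ℝ) {n : ℕ} (s : Fin (n + 1) → Fin d → ℝ) :
    EuclideanSpace ℝ (Fin d) :=
  Pfin d Ψ s - Pfin d Ψ (fun i : Fin n => s i.castSucc) +
    Pfin d Theta (fun i : Fin n => s i.castSucc)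

/-- The Cantor set `𝒞_Ψ = ⋂_{n≥1} ⋃_{𝔰 ∈ S_n} Q̄(P^n_Ψ(𝔰), ℓ^n_Ψ)`. -/
def CantorSet (d : ℕ) (Ψ : ℕ → ℝ) : Set (EuclideanSpace ℝ (Fin d)) :=
  ⋂ n : ℕ, ⋃ (s : Fin (n + 1) → Fin d → ℝ) (_ : IsSignStr s),
    cubeC d (Pfin d Ψ s) (ell Ψ (n + 1))

/-- The closed unit cube `[0,1]^d`. -/
def unitCubeIcc (d : ℕ) : Set (EuclideanSpace ℝ (Fin d)) := {x | ∀ j, x j ∈ Icc (0 : ℝ) 1}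

/-- The half-open unit cube `[0,1)^d`. -/
def unitCubeIco (d : ℕ) : Set (EuclideanSpace ℝ (Fin d)) := {x | ∀ j, x j ∈ Ico (0 : ℝ) 1}

/-- The open unit cube `(0,1)^d`. -/
def unitCubeIoo (d : ℕ) : Set (EuclideanSpace ℝ (Fin d)) := {x | ∀ j, x j ∈ Ioo (0 : ℝ) 1}

/-- `τ_i = (1 − 2^{−(1−β)i})/(2^{1−β} − 1)`. -/
def tau (β : ℝ) (i : ℕ) : ℝ := (1 - (2 : ℝ) ^ (-((1 - β) * i))) / ((2 : ℝ) ^ (1 - β) - 1)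

/-- `τ_∞ = 1/(2^{1−β} − 1)`. -/
def tauInf (β : ℝ) : ℝ := ((2 : ℝ) ^ (1 - β) - 1)⁻¹

/-- `γ` is a trajectory of the (time-dependent) vector field `u` on `[0,T]` starting at `x`:
`γ 0 = x` and `γ′(t) = u(t, γ(t))` for all `t ∈ [0,T]` (one-sided at the endpoints). -/
def IsTrajectoryOn (d : ℕ) (u : ℝ → EuclideanSpace ℝ (Fin d) → EuclideanSpace ℝ (Fin d))
    (T : ℝ) (x : EuclideanSpace ℝ (Fin d)) (γ : ℝ → EuclideanSpace ℝ (Fin d)) : Prop :=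
  γ 0 = x ∧ ∀ t ∈ Icc 0 T, HasDerivWithinAt γ (u t (γ t)) (Icc 0 T) t

/-- The integer lattice vector `k ∈ ℤ^d` viewed as a point of `ℝ^d`. -/
def intVec (d : ℕ) (k : Fin d → ℤ) : EuclideanSpace ℝ (Fin d) := WithLp.toLp 2 (fun i => (k i : ℝ))

/-! Passing from `𝔰′` to `𝔰` moves the centre by `ℓ^n_Ψ / 4` in every coordinate, while the
half-side shrinks from `ℓ^n_Ψ / 2` to `ℓ^{n+1}_Ψ / 2 ≤ ℓ^n_Ψ / 4` because `ψ_{n+1} ≤ 1`; so the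
smaller cube stays inside the larger one. -/

lemma ell_nonneg {Ψ : ℕ → ℝ} (hΨ : ∀ i, 0 ≤ Ψ i) (n : ℕ) : 0 ≤ ell Ψ n :=
  div_nonneg (Finset.prod_nonneg fun i _ => hΨ i) (by positivity)

lemma ell_succ (Ψ : ℕ → ℝ) (n : ℕ) : ell Ψ (n + 1) = ell Ψ n * Ψ n / 2 := by
  simp only [ell, Finset.prod_range_succ, pow_succ]
  ring

lemma ell_succ_le_half {Ψ : ℕ → ℝ} (hΨ : ∀ i, 0 ≤ Ψ i) {n : ℕ} (hΨn : Ψ n ≤ 1) :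
    ell Ψ (n + 1) ≤ ell Ψ n / 2 := by
  rw [ell_succ]
  nlinarith [ell_nonneg hΨ n]

lemma Pfin_sub_Pfin_castSucc (d : ℕ) (Ψ : ℕ → ℝ) {n : ℕ} (s : Fin (n + 1) → Fin d → ℝ)
    (j : Fin d) :
    Pfin d Ψ s j - Pfin d Ψ (fun i : Fin n => s i.castSucc) j =
      s (Fin.last n) j * ell Ψ n / 4 := by
  simp only [Pfin, PiLp.toLp_apply, Fin.sum_univ_castSucc, Fin.val_castSucc, Fin.val_last]
  ring

lemma cubeC_subset_cubeC {d : ℕ} {c c' : EuclideanSpace ℝ (Fin d)} {l l' : ℝ}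
    (h : ∀ j, |c j - c' j| + l / 2 ≤ l' / 2) : cubeC d c l ⊆ cubeC d c' l' := by
  intro x hx j
  calc |x j - c' j| ≤ |x j - c j| + |c j - c' j| := abs_sub_le _ _ _
    _ ≤ l' / 2 := by linarith [hx j, h j]

theorem statement7_general (d n : ℕ)
    (Ψ : ℕ → ℝ) (hΨ : ∀ i, Ψ i ∈ Ioc (0 : ℝ) 1)
    (s : Fin (n + 1) → Fin d → ℝ) (hs : IsSignStr s) :
    cubeC d (Pfin d Ψ s) (ell Ψ (n + 1)) ⊆
      cubeC d (Pfin d Ψ (fun i : Fin n => s i.castSucc)) (ell Ψ n) := by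
  have hΨ₀ : ∀ i, 0 ≤ Ψ i := fun i => (hΨ i).1.le
  refine cubeC_subset_cubeC fun j => ?_
  have hell := ell_nonneg hΨ₀ n
  have hshift : |Pfin d Ψ s j - Pfin d Ψ (fun i : Fin n => s i.castSucc) j| = ell Ψ n / 4 := by
    have hsign : |s (Fin.last n) j| = 1 := by rcases hs (Fin.last n) j with h | h <;> simp [h]
    rw [Pfin_sub_Pfin_castSucc, abs_div, abs_mul, hsign, one_mul, abs_of_nonneg hell]
    norm_num
  linarith [ell_succ_le_half hΨ₀ (hΨ n).2]

/-- Lemma 2.4: for `0 < ψ_i ≤ 1` and a string `𝔰 ∈ S_{n+1}` (with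
`n ≥ 1`, i.e. generation at least `2`), the cube `Q̄(P^{n+1}_Ψ(𝔰), ℓ^{n+1}_Ψ)` is contained
in the cube `Q̄(P^n_Ψ(𝔰′), ℓ^n_Ψ)` of its truncation `𝔰′`. -/
theorem statement7 (d n : ℕ) (hd : 1 ≤ d) (hn : 1 ≤ n)
    (Ψ : ℕ → ℝ) (hΨ : ∀ i, Ψ i ∈ Ioc (0 : ℝ) 1)
    (s : Fin (n + 1) → Fin d → ℝ) (hs : IsSignStr s) :
    cubeC d (Pfin d Ψ s) (ell Ψ (n + 1)) ⊆
      cubeC d (Pfin d Ψ (fun i : Fin n => s i.castSucc)) (ell Ψ n) :=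
  statement7_general d n Ψ hΨ s hs

end
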